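/- arXiv:2106.08436 — 2 statements merged into one kernel-verified Lean document; each statement's English description precedes it below -/
import Mathlib

section
/- Let f : X → X be a topologically exact continuous map on a compact metric space, φ : X → ℝ continuous, and suppose every point has at least one preimage. Let ν be a Borel probability on X satisfying ∫ L_φ g dν = ρ ∫ g dν for all continuous g, where L_φ g(x) = Σ_{f(y)=x} e^{φ(y)} g(y) (each x having finitely many preimages) and ρ > 0. Then ν has full support: ν(A) > 0 for every nonempty open set A. -/
/-!
Take a continuous `g ≥ 0` whose support is exactly `A`. The transfer operator is positive and
pushes positivity forward along `f`: `L_φ^n g (x) > 0` as soon as `x = f^n y` for some `y ∈ A`.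
Choosing `n` with `f^n A = X` by exactness makes `L_φ^n g` everywhere positive, so
`ρ^n ∫ g dν = ∫ L_φ^n g dν > 0`; hence `∫ g dν > 0`, which forces `ν A > 0`.
-/

open MeasureTheory

/-- The Ruelle–Perron–Frobenius (transfer) operator
`L_φ g (x) = Σ_{f(y) = x} e^{φ(y)} g(y)`, for a map with finite fibers. -/
noncomputable def transferOp {X : Type*} (f : X → X) (φ : X → ℝ)
    (hfin : ∀ x : X, (f ⁻¹' {x}).Finite) (g : X → ℝ) (x : X) : ℝ :=
  ∑ y ∈ (hfin x).toFinset, Real.exp (φ y) * g y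

open Function

theorem exists_continuous_nonneg_support_eq {X : Type*} [TopologicalSpace X]
    [PerfectlyNormalSpace X] {U : Set X} (hU : IsOpen U) :
    ∃ g : X → ℝ, Continuous g ∧ 0 ≤ g ∧ support g = U := by
  obtain ⟨g, hg_zero, hg_mem⟩ :=
    perfectlyNormalSpace_iff_forall_isClosed_preimage_zero.mp ‹_› Uᶜ hU.isClosed_compl
  refine ⟨g, g.continuous, fun x => (hg_mem x).1, ?_⟩
  rw [support, ← compl_compl U, hg_zero]
  rfl

theorem integral_pos_of_forall_pos {α : Type*} [MeasurableSpace α] {μ : Measure α} [NeZero μ]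
    {g : α → ℝ} (hg : Integrable g μ) (hpos : ∀ x, 0 < g x) : 0 < ∫ x, g x ∂μ := by
  rw [integral_pos_iff_support_of_nonneg (fun x => (hpos x).le) hg,
    support_eq_univ fun x => (hpos x).ne', Measure.measure_univ_pos]
  exact NeZero.ne μ

theorem integral_iterate_eq_pow_mul {X : Type*} [TopologicalSpace X] [MeasurableSpace X]
    {ν : Measure X} {T : (X → ℝ) → X → ℝ} (hT : ∀ g, Continuous g → Continuous (T g)) {ρ : ℝ}
    (heig : ∀ g, Continuous g → ∫ x, T g x ∂ν = ρ * ∫ x, g x ∂ν) {g : X → ℝ}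
    (hg : Continuous g) (n : ℕ) : ∫ x, T^[n] g x ∂ν = ρ ^ n * ∫ x, g x ∂ν := by
  induction n with
  | zero => simp
  | succ n ih =>
    rw [iterate_succ_apply', heig _ (Iterate.rec Continuous hg hT n), ih, pow_succ, mul_assoc,
      mul_left_comm]

section transferOp

variable {X : Type*} {f : X → X} {φ : X → ℝ} {hfin : ∀ x, (f ⁻¹' {x}).Finite} {g : X → ℝ}

theorem transferOp_nonneg (hg : 0 ≤ g) : 0 ≤ transferOp f φ hfin g :=
  fun _ => Finset.sum_nonneg fun y _ => mul_nonneg (Real.exp_pos _).le (hg y)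

theorem transferOp_pos_apply (hg : 0 ≤ g) {y : X} (hy : 0 < g y) :
    0 < transferOp f φ hfin g (f y) :=
  Finset.sum_pos' (fun z _ => mul_nonneg (Real.exp_pos _).le (hg z))
    ⟨y, by simp, mul_pos (Real.exp_pos _) hy⟩

theorem transferOp_iterate_nonneg (hg : 0 ≤ g) (n : ℕ) : 0 ≤ (transferOp f φ hfin)^[n] g :=
  Iterate.rec (0 ≤ ·) hg (fun _ => transferOp_nonneg) n

theorem transferOp_iterate_pos_apply (hg : 0 ≤ g) {y : X} (hy : 0 < g y) (n : ℕ) :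
    0 < (transferOp f φ hfin)^[n] g (f^[n] y) := by
  induction n with
  | zero => exact hy
  | succ n ih =>
    rw [iterate_succ_apply', iterate_succ_apply']
    exact transferOp_pos_apply (transferOp_iterate_nonneg hg n) ih

end transferOp

theorem eigenmeasure_full_support_general {X : Type*} [MetricSpace X] [CompactSpace X]
    [MeasurableSpace X] [BorelSpace X]
    (f : X → X)
    (hexact : ∀ U : Set X, IsOpen U → U.Nonempty → ∃ n : ℕ, f^[n] '' U = Set.univ)
    (hfin : ∀ x : X, (f ⁻¹' {x}).Finite)
    (φ : X → ℝ)
    (hLcont : ∀ g : X → ℝ, Continuous g → Continuous (transferOp f φ hfin g))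
    (ν : Measure X) [IsProbabilityMeasure ν] (ρ : ℝ)
    (heig : ∀ g : X → ℝ, Continuous g →
      ∫ x, transferOp f φ hfin g x ∂ν = ρ * ∫ x, g x ∂ν) :
    ∀ A : Set X, IsOpen A → A.Nonempty → 0 < ν A := by
  intro A hA hAne
  obtain ⟨g, hg, hg_nonneg, hg_supp⟩ := exists_continuous_nonneg_support_eq hA
  obtain ⟨n, hn⟩ := hexact A hA hAne
  have hint : ∀ h : X → ℝ, Continuous h → Integrable h ν :=
    fun h hh => hh.integrable_of_hasCompactSupport (.of_compactSpace h)
  set Lg := (transferOp f φ hfin)^[n] g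
  have hLg_pos : ∀ x, 0 < Lg x := by
    intro x
    obtain ⟨y, hy, rfl⟩ : x ∈ f^[n] '' support g := hg_supp ▸ hn ▸ Set.mem_univ x
    exact transferOp_iterate_pos_apply hg_nonneg ((hg_nonneg y).lt_of_ne' hy) n
  have hLg_int : 0 < ∫ x, Lg x ∂ν :=
    integral_pos_of_forall_pos (hint _ (Iterate.rec Continuous hg hLcont n)) hLg_pos
  rw [integral_iterate_eq_pow_mul hLcont heig hg] at hLg_int
  have hg_int : 0 < ∫ x, g x ∂ν :=
    (integral_nonneg hg_nonneg).lt_of_ne fun h => by simp [← h] at hLg_int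
  rwa [← hg_supp, ← integral_pos_iff_support_of_nonneg hg_nonneg (hint g hg)]

/-- If `f` is a topologically exact continuous map on a compact metric space
with finite nonempty fibers, `φ` is continuous, and `ν` is a Borel probability with
`L_φ* ν = ρ·ν` for some `ρ > 0`, then `ν` has full support: every nonempty open set has
positive measure. -/
theorem eigenmeasure_full_support {X : Type*} [MetricSpace X] [CompactSpace X]
    [MeasurableSpace X] [BorelSpace X]
    (f : X → X) (hf : Continuous f)
    (hexact : ∀ U : Set X, IsOpen U → U.Nonempty → ∃ n : ℕ, f^[n] '' U = Set.univ)
    (hfin : ∀ x : X, (f ⁻¹' {x}).Finite) (hne : ∀ x : X, (f ⁻¹' {x}).Nonempty)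
    (φ : X → ℝ) (hφ : Continuous φ)
    (hLcont : ∀ g : X → ℝ, Continuous g → Continuous (transferOp f φ hfin g))
    (ν : Measure X) [IsProbabilityMeasure ν] (ρ : ℝ) (hρ : 0 < ρ)
    (heig : ∀ g : X → ℝ, Continuous g →
      ∫ x, transferOp f φ hfin g x ∂ν = ρ * ∫ x, g x ∂ν) :
    ∀ A : Set X, IsOpen A → A.Nonempty → 0 < ν A :=
  eigenmeasure_full_support_general f hexact hfin φ hLcont ν ρ heig
end

section
/- Let f : X → X be a topologically exact continuous map on a compact metric space such that each point has finitely many preimages, let φ : X → ℝ be continuous, and let L_φ be the transfer operator. If a continuous function h ≥ 0, not identically zero, satisfies L_φ h = λ h for some λ > 0, then h(x) > 0 for every x ∈ X. -/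
/-- If `f` is a topologically exact continuous map on a compact metric space
with finite nonempty fibers, `φ` is continuous, and a continuous function `h ≥ 0`, not
identically zero, satisfies `L_φ h = λ h` with `λ > 0`, then `h` is strictly positive. -/
theorem eigenfunction_positive {X : Type*} [MetricSpace X] [CompactSpace X]
    (f : X → X) (hf : Continuous f)
    (hexact : ∀ U : Set X, IsOpen U → U.Nonempty → ∃ n : ℕ, f^[n] '' U = Set.univ)
    (hfin : ∀ x : X, (f ⁻¹' {x}).Finite) (hne : ∀ x : X, (f ⁻¹' {x}).Nonempty)
    (φ : X → ℝ) (hφ : Continuous φ)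
    (h : X → ℝ) (hhcont : Continuous h) (hnonneg : ∀ x, 0 ≤ h x)
    (hnontriv : ∃ x, h x ≠ 0)
    (lam : ℝ) (hlam : 0 < lam)
    (heig : ∀ x, transferOp f φ hfin h x = lam * h x) :
    ∀ x : X, 0 < h x := by
  -- step: positivity propagates forward
  have step : ∀ z : X, 0 < h z → 0 < h (f z) := by
    intro z hz
    have hmem : z ∈ (hfin (f z)).toFinset := by
      simp [Set.Finite.mem_toFinset]
    have hle : Real.exp (φ z) * h z ≤ transferOp f φ hfin h (f z) := by
      refine Finset.single_le_sum (f := fun y => Real.exp (φ y) * h y) (fun y _ => ?_) hmem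
      exact mul_nonneg (Real.exp_pos _).le (hnonneg y)
    have hpos : 0 < transferOp f φ hfin h (f z) :=
      lt_of_lt_of_le (mul_pos (Real.exp_pos _) hz) hle
    rw [heig] at hpos
    nlinarith [hnonneg (f z)]
  have iter : ∀ n : ℕ, ∀ z : X, 0 < h z → 0 < h (f^[n] z) := by
    intro n
    induction n with
    | zero => intro z hz; simpa using hz
    | succ n ih =>
      intro z hz
      rw [Function.iterate_succ_apply']
      exact step _ (ih z hz)
  obtain ⟨x0, hx0⟩ := hnontriv
  have hU : IsOpen {x : X | 0 < h x} := isOpen_lt continuous_const hhcont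
  have hUne : ({x : X | 0 < h x}).Nonempty := ⟨x0, (hnonneg x0).lt_of_ne (Ne.symm hx0)⟩
  obtain ⟨n, hn⟩ := hexact _ hU hUne
  intro x
  have : x ∈ f^[n] '' {x : X | 0 < h x} := hn ▸ Set.mem_univ x
  obtain ⟨z, hz, rfl⟩ := this
  exact iter n z hz
end
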